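/- For every μ ∈ (0,1) and every σ² > 0, the second moment of the score with respect to μ under the simplex distribution equals ∫₀¹ u(y,μ)² · (y−μ)² · p(y;μ,σ²) dy = v(μ,σ²), where v(μ,σ²) = σ²·( 3σ²/(μ(1−μ)) + 1/(μ³(1−μ)³) ). (This is the key quantity in the Fisher information K_ββ = X̃ᵀ S W X̃ with weight w = v/(σ² g′(μ)²).) -/

import Mathlib

/-! Substitute the deviance residual `t = sign (y - μ) √(d(y; μ))`, which maps `(0, 1)`
increasingly onto `ℝ` and turns the exponent of `p` into `-t² / (2σ²)`. With `a = μ (1 - μ)` one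
has `u = (1 + a² t²) / a³`, and the Jacobian `dy/dt` turns `u² (y - μ)² p(y) dy` into
`t² (1 + a² t²) φ(t) (1 + (1 - 2μ) ρ(t)) dt / a³`, where `φ` is the `N(0, σ²)` density and `ρ` is
odd. The odd part integrates to zero, and the even part gives
`(E t² + a² E t⁴) / a³ = (σ² + 3 a² σ⁴) / a³ = v(μ, σ²)`. -/

open Real MeasureTheory

/-- The unit deviance of the simplex distribution. -/
noncomputable def simplexDev (y μ : ℝ) : ℝ :=
  (y - μ)^2 / (y * (1 - y) * μ^2 * (1 - μ)^2)

/-- The simplex density. -/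
noncomputable def simplexPdf (y μ σ2 : ℝ) : ℝ :=
  (2 * Real.pi * σ2 * (y * (1 - y))^3) ^ (-(1/2) : ℝ) *
    Real.exp (-(simplexDev y μ) / (2 * σ2))

/-- The quantity u(y,μ). -/
noncomputable def simplexU (y μ : ℝ) : ℝ :=
  (1 / (μ * (1 - μ))) * (simplexDev y μ + 1 / (μ^2 * (1 - μ)^2))

/-- The quantity v(μ,σ²). -/
noncomputable def simplexV (μ σ2 : ℝ) : ℝ :=
  σ2 * (3 * σ2 / (μ * (1 - μ)) + 1 / (μ^3 * (1 - μ)^3))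

open Set Filter Topology

section GaussianMoments

variable {b : ℝ}

lemma integrable_pow_mul_exp_neg_mul_sq (hb : 0 < b) (n : ℕ) :
    Integrable fun x : ℝ => x ^ n * exp (-b * x ^ 2) := by
  simpa [rpow_natCast] using
    integrable_rpow_mul_exp_neg_mul_sq hb (s := n) (by linarith [n.cast_nonneg (α := ℝ)])

lemma integral_pow_add_two_mul_exp_neg_mul_sq (hb : 0 < b) (n : ℕ) :
    ∫ x : ℝ, x ^ (n + 2) * exp (-b * x ^ 2) =
      (n + 1) / (2 * b) * ∫ x : ℝ, x ^ n * exp (-b * x ^ 2) := by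
  have hint := integrable_pow_mul_exp_neg_mul_sq hb
  have hderiv : ∀ x : ℝ, HasDerivAt (fun x => x ^ (n + 1) * exp (-b * x ^ 2))
      ((n + 1) * (x ^ n * exp (-b * x ^ 2)) - 2 * b * (x ^ (n + 2) * exp (-b * x ^ 2))) x := by
    intro x
    refine ((hasDerivAt_pow (n + 1) x).mul ((hasDerivAt_pow 2 x).const_mul (-b)).exp).congr_deriv ?_
    simp only [Nat.add_sub_cancel]
    push_cast
    ring
  have h := integral_eq_zero_of_hasDerivAt_of_integrable hderiv
    (((hint n).const_mul _).sub ((hint (n + 2)).const_mul _)) (hint (n + 1))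
  rw [integral_sub ((hint n).const_mul _) ((hint (n + 2)).const_mul _), integral_const_mul,
    integral_const_mul, sub_eq_zero] at h
  rw [div_mul_eq_mul_div, eq_div_iff (by positivity)]
  linarith

lemma integral_sq_mul_exp_neg_mul_sq (hb : 0 < b) :
    ∫ x : ℝ, x ^ 2 * exp (-b * x ^ 2) = √(π / b) / (2 * b) := by
  have h := integral_pow_add_two_mul_exp_neg_mul_sq hb 0
  simp only [zero_add, pow_zero, one_mul, integral_gaussian] at h
  rw [h]
  ring

lemma integral_pow_four_mul_exp_neg_mul_sq (hb : 0 < b) :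
    ∫ x : ℝ, x ^ 4 * exp (-b * x ^ 2) = 3 * √(π / b) / (4 * b ^ 2) := by
  have h := integral_pow_add_two_mul_exp_neg_mul_sq hb 2
  norm_num only at h
  rw [h, integral_sq_mul_exp_neg_mul_sq hb]
  field_simp
  ring

end GaussianMoments

lemma integral_eq_zero_of_odd {G E : Type*} [MeasurableSpace G] [AddGroup G] [MeasurableNeg G]
    [NormedAddCommGroup E] [NormedSpace ℝ E] {ν : Measure G} [ν.IsNegInvariant] {f : G → E}
    (hf : Function.Odd f) : ∫ x, f x ∂ν = 0 := by
  have h := integral_neg_eq_self f ν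
  rw [show (fun x => f (-x)) = fun x => -f x from funext hf, integral_neg] at h
  have h2 : (2 : ℝ) • ∫ x, f x ∂ν = 0 := by
    rw [two_smul]
    nth_rewrite 1 [← h]
    exact neg_add_cancel _
  exact (smul_eq_zero.1 h2).resolve_left two_ne_zero

lemma mul_one_sub_pos_of_mem_Ioo {x : ℝ} (hx : x ∈ Ioo (0 : ℝ) 1) : 0 < x * (1 - x) :=
  mul_pos hx.1 (sub_pos.2 hx.2)

lemma add_sub_two_mul_mul_pos {x y : ℝ} (hx : x ∈ Ioo (0 : ℝ) 1) (hy : y ∈ Ioo (0 : ℝ) 1) :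
    0 < x + y - 2 * x * y := by
  nlinarith [hx.1, hx.2, hy.1, hy.2]

/-- The deviance residual `sign (y - μ) √(d(y; μ))`. -/
noncomputable def simplexResidual (y μ : ℝ) : ℝ :=
  (y - μ) / (μ * (1 - μ) * √(y * (1 - y)))

/-- The odd function `ρ` in the Jacobian factor `1 + (1 - 2μ) ρ(t)` of the substitution
`t = simplexResidual y μ`. -/
noncomputable def simplexSkew (μ t : ℝ) : ℝ :=
  μ * (1 - μ) * t / √((μ * (1 - μ) * t) ^ 2 + 4 * (μ * (1 - μ)))

noncomputable def simplexScoreMomentDensity (μ σ2 t : ℝ) : ℝ :=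
  t ^ 2 * (1 + (μ * (1 - μ)) ^ 2 * t ^ 2) * exp (-t ^ 2 / (2 * σ2)) /
    ((μ * (1 - μ)) ^ 3 * √(2 * π * σ2)) * (1 + (1 - 2 * μ) * simplexSkew μ t)

section Simplex

variable {μ σ2 y : ℝ}

lemma simplexResidual_sq (hy : y ∈ Ioo (0 : ℝ) 1) :
    simplexResidual y μ ^ 2 = simplexDev y μ := by
  rw [simplexResidual, simplexDev, div_pow, mul_pow, mul_pow,
    sq_sqrt (mul_one_sub_pos_of_mem_Ioo hy).le]
  ring

lemma hasDerivAt_simplexResidual (hμ : μ ∈ Ioo (0 : ℝ) 1) (hy : y ∈ Ioo (0 : ℝ) 1) :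
    HasDerivAt (simplexResidual · μ)
      ((μ + y - 2 * μ * y) / (2 * (μ * (1 - μ)) * √(y * (1 - y)) ^ 3)) y := by
  have ha : 0 < μ * (1 - μ) := mul_one_sub_pos_of_mem_Ioo hμ
  have hq : 0 < y * (1 - y) := mul_one_sub_pos_of_mem_Ioo hy
  have hpoly : HasDerivAt (fun y => y * (1 - y)) (1 - 2 * y) y :=
    ((hasDerivAt_id' y).mul ((hasDerivAt_id' y).const_sub 1)).congr_deriv (by ring)
  refine (((hasDerivAt_id' y).sub_const μ).div ((hpoly.sqrt hq.ne').const_mul (μ * (1 - μ)))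
    (by positivity)).congr_deriv ?_
  field_simp
  rw [sq_sqrt hq.le]
  ring

lemma strictMonoOn_simplexResidual (hμ : μ ∈ Ioo (0 : ℝ) 1) :
    StrictMonoOn (simplexResidual · μ) (Ioo 0 1) := by
  refine strictMonoOn_of_deriv_pos (convex_Ioo 0 1)
    (fun y hy => (hasDerivAt_simplexResidual hμ hy).continuousAt.continuousWithinAt) ?_
  rw [interior_Ioo]
  intro y hy
  rw [(hasDerivAt_simplexResidual hμ hy).deriv]
  have hW : 0 < μ + y - 2 * μ * y := add_sub_two_mul_mul_pos hμ hy
  have hr : 0 < √(y * (1 - y)) := sqrt_pos.2 (mul_one_sub_pos_of_mem_Ioo hy)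
  have ha : 0 < μ * (1 - μ) := mul_one_sub_pos_of_mem_Ioo hμ
  positivity

lemma tendsto_inv_mul_sqrt_mul_one_sub {a x : ℝ} (ha : 0 < a) (hx : x * (1 - x) = 0) :
    Tendsto (fun y => (a * √(y * (1 - y)))⁻¹) (𝓝[Ioo 0 1] x) atTop := by
  refine tendsto_inv_nhdsGT_zero.comp (tendsto_nhdsWithin_of_tendsto_nhds_of_eventually_within _
    ?_ (eventually_nhdsWithin_of_forall fun y hy => ?_))
  · have hc : Continuous fun y : ℝ => a * √(y * (1 - y)) := by fun_prop
    simpa [hx] using (hc.tendsto x).mono_left nhdsWithin_le_nhds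
  · exact mul_pos ha (sqrt_pos.2 (mul_one_sub_pos_of_mem_Ioo hy))

lemma image_simplexResidual (hμ : μ ∈ Ioo (0 : ℝ) 1) :
    (simplexResidual · μ) '' Ioo 0 1 = univ := by
  have ha : 0 < μ * (1 - μ) := mul_one_sub_pos_of_mem_Ioo hμ
  have hcont : ContinuousOn (simplexResidual · μ) (Ioo 0 1) :=
    fun y hy => (hasDerivAt_simplexResidual hμ hy).continuousAt.continuousWithinAt
  have hnum (x : ℝ) : Tendsto (fun y : ℝ => y - μ) (𝓝[Ioo 0 1] x) (𝓝 (x - μ)) :=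
    ((continuous_sub_right μ).tendsto x).mono_left nhdsWithin_le_nhds
  refine eq_univ_of_univ_subset (hcont.surjOn_of_tendsto (nonempty_Ioo.2 one_pos) ?_ ?_)
  · refine (tendsto_comp_coe_Ioo_atBot one_pos (f := (simplexResidual · μ))).2 ?_
    rw [← nhdsWithin_Ioo_eq_nhdsGT one_pos]
    exact ((hnum 0).neg_mul_atTop (by linarith [hμ.1])
      (tendsto_inv_mul_sqrt_mul_one_sub ha (by ring))).congr fun y => (div_eq_mul_inv _ _).symm
  · refine (tendsto_comp_coe_Ioo_atTop one_pos (f := (simplexResidual · μ))).2 ?_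
    rw [← nhdsWithin_Ioo_eq_nhdsLT one_pos]
    exact ((hnum 1).pos_mul_atTop (by linarith [hμ.2])
      (tendsto_inv_mul_sqrt_mul_one_sub ha (by ring))).congr fun y => (div_eq_mul_inv _ _).symm

lemma simplexSkew_neg (t : ℝ) : simplexSkew μ (-t) = -simplexSkew μ t := by
  simp only [simplexSkew, mul_neg, neg_sq, neg_div]

lemma abs_simplexSkew_le_one (hμ : μ ∈ Ioo (0 : ℝ) 1) (t : ℝ) : |simplexSkew μ t| ≤ 1 := by
  have ha : 0 < μ * (1 - μ) := mul_one_sub_pos_of_mem_Ioo hμ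
  rw [simplexSkew, abs_div, abs_of_nonneg (sqrt_nonneg _)]
  exact div_le_one_of_le₀ (abs_le_sqrt (by linarith)) (sqrt_nonneg _)

lemma continuous_simplexSkew (hμ : μ ∈ Ioo (0 : ℝ) 1) : Continuous (simplexSkew μ) := by
  have ha : 0 < μ * (1 - μ) := mul_one_sub_pos_of_mem_Ioo hμ
  exact (continuous_const.mul continuous_id).div (by fun_prop)
    fun t => (sqrt_pos.2 (by positivity)).ne'

lemma simplexSkew_simplexResidual (hμ : μ ∈ Ioo (0 : ℝ) 1) (hy : y ∈ Ioo (0 : ℝ) 1) :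
    simplexSkew μ (simplexResidual y μ) = (y - μ) / (μ + y - 2 * μ * y) := by
  have hq : 0 < y * (1 - y) := mul_one_sub_pos_of_mem_Ioo hy
  have hW : 0 < μ + y - 2 * μ * y := add_sub_two_mul_mul_pos hμ hy
  have hμ0 : μ ≠ 0 := hμ.1.ne'
  have hμ1 : 1 - μ ≠ 0 := (sub_pos.2 hμ.2).ne'
  have hsq : (μ * (1 - μ) * simplexResidual y μ) ^ 2 + 4 * (μ * (1 - μ)) =
      ((μ + y - 2 * μ * y) / √(y * (1 - y))) ^ 2 := by
    rw [simplexResidual]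
    field_simp
    rw [sq_sqrt hq.le]
    ring
  rw [simplexSkew, hsq, sqrt_sq (by positivity), simplexResidual]
  field_simp

lemma simplexPdf_eq (hσ2 : 0 ≤ σ2) (hy : y ∈ Ioo (0 : ℝ) 1) :
    simplexPdf y μ σ2 =
      exp (-simplexDev y μ / (2 * σ2)) / (√(2 * π * σ2) * √(y * (1 - y)) ^ 3) := by
  have hq : 0 < y * (1 - y) := mul_one_sub_pos_of_mem_Ioo hy
  have hsq : 2 * π * σ2 * (y * (1 - y)) ^ 3 = (√(2 * π * σ2) * √(y * (1 - y)) ^ 3) ^ 2 := by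
    rw [eq_comm, mul_pow, sq_sqrt (by positivity), ← pow_mul, mul_comm 3 2, pow_mul,
      sq_sqrt hq.le]
  rw [simplexPdf, hsq, rpow_neg (sq_nonneg _), ← sqrt_eq_rpow, sqrt_sq (by positivity),
    inv_mul_eq_div]

lemma simplexU_eq (hμ : μ ∈ Ioo (0 : ℝ) 1) (hy : y ∈ Ioo (0 : ℝ) 1) :
    simplexU y μ = (1 + (μ * (1 - μ)) ^ 2 * simplexResidual y μ ^ 2) / (μ * (1 - μ)) ^ 3 := by
  have hμ0 : μ ≠ 0 := hμ.1.ne'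
  have hμ1 : 1 - μ ≠ 0 := (sub_pos.2 hμ.2).ne'
  rw [simplexU, ← simplexResidual_sq hy]
  field_simp
  ring

lemma simplexU_sq_mul_sq_mul_simplexPdf_eq (hμ : μ ∈ Ioo (0 : ℝ) 1) (hσ2 : 0 < σ2)
    (hy : y ∈ Ioo (0 : ℝ) 1) :
    simplexU y μ ^ 2 * (y - μ) ^ 2 * simplexPdf y μ σ2 =
      |(μ + y - 2 * μ * y) / (2 * (μ * (1 - μ)) * √(y * (1 - y)) ^ 3)| *
        simplexScoreMomentDensity μ σ2 (simplexResidual y μ) := by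
  have hμ0 : μ ≠ 0 := hμ.1.ne'
  have hμ1 : 1 - μ ≠ 0 := (sub_pos.2 hμ.2).ne'
  have ha : 0 < μ * (1 - μ) := mul_one_sub_pos_of_mem_Ioo hμ
  have hq : 0 < y * (1 - y) := mul_one_sub_pos_of_mem_Ioo hy
  have hW : 0 < μ + y - 2 * μ * y := add_sub_two_mul_mul_pos hμ hy
  have hyμ : y - μ = μ * (1 - μ) * √(y * (1 - y)) * simplexResidual y μ := by
    rw [simplexResidual]
    field_simp
  have hJacobian : 1 + (1 - 2 * μ) * ((y - μ) / (μ + y - 2 * μ * y)) =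
      2 * √(y * (1 - y)) ^ 2 * (1 + (μ * (1 - μ)) ^ 2 * simplexResidual y μ ^ 2) /
        (μ + y - 2 * μ * y) := by
    rw [eq_div_iff hW.ne']
    field_simp
    linear_combination (-2) * sq_sqrt hq.le + 2 * congrArg (· ^ 2) hyμ
  rw [simplexScoreMomentDensity, simplexSkew_simplexResidual hμ hy, hJacobian,
    simplexPdf_eq hσ2.le hy, ← simplexResidual_sq hy, simplexU_eq hμ hy,
    abs_of_pos (by positivity), hyμ]
  generalize μ + y - 2 * μ * y = W at hW ⊢
  field_simp

lemma integral_simplexScoreMomentDensity (hμ : μ ∈ Ioo (0 : ℝ) 1) (hσ2 : 0 < σ2) :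
    ∫ t, simplexScoreMomentDensity μ σ2 t = simplexV μ σ2 := by
  have hb : 0 < (2 * σ2)⁻¹ := by positivity
  set c := ((μ * (1 - μ)) ^ 3 * √(2 * π * σ2))⁻¹
  set q : ℝ → ℝ := fun t => t ^ 2 * exp (-(2 * σ2)⁻¹ * t ^ 2) +
    (μ * (1 - μ)) ^ 2 * (t ^ 4 * exp (-(2 * σ2)⁻¹ * t ^ 2))
  have hq_int : Integrable q := (integrable_pow_mul_exp_neg_mul_sq hb 2).add
    ((integrable_pow_mul_exp_neg_mul_sq hb 4).const_mul _)
  have hq : ∫ t, q t = √(2 * π * σ2) * (σ2 + 3 * (μ * (1 - μ)) ^ 2 * σ2 ^ 2) := by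
    rw [integral_add (integrable_pow_mul_exp_neg_mul_sq hb 2)
      ((integrable_pow_mul_exp_neg_mul_sq hb 4).const_mul _), integral_const_mul,
      integral_sq_mul_exp_neg_mul_sq hb, integral_pow_four_mul_exp_neg_mul_sq hb,
      show π / (2 * σ2)⁻¹ = 2 * π * σ2 by field_simp]
    field_simp
    ring
  have hq_skew_int : Integrable fun t => q t * simplexSkew μ t :=
    hq_int.mul_bdd (continuous_simplexSkew hμ).aestronglyMeasurable
      (ae_of_all _ fun t => (norm_eq_abs _).trans_le (abs_simplexSkew_le_one hμ t))
  have hq_skew : ∫ t, q t * simplexSkew μ t = 0 :=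
    integral_eq_zero_of_odd fun t => by simp only [q, simplexSkew_neg, neg_sq]; ring
  have hsplit : simplexScoreMomentDensity μ σ2 =
      fun t => c * q t + c * (1 - 2 * μ) * (q t * simplexSkew μ t) := by
    ext t
    simp only [simplexScoreMomentDensity, q, c]
    rw [show -t ^ 2 / (2 * σ2) = -(2 * σ2)⁻¹ * t ^ 2 by ring]
    ring
  rw [hsplit, integral_add (hq_int.const_mul _) (hq_skew_int.const_mul _), integral_const_mul,
    integral_const_mul, hq, hq_skew, simplexV]
  simp only [c]
  field_simp
  ring

end Simplex

/-- The second moment of the score with respect to μ under the simplex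
distribution equals v(μ,σ²). -/
theorem simplexPdf_score_second_moment (μ σ2 : ℝ) (hμ : μ ∈ Set.Ioo (0:ℝ) 1)
    (hσ2 : 0 < σ2) :
    ∫ y in (0:ℝ)..1, (simplexU y μ)^2 * (y - μ)^2 * simplexPdf y μ σ2 =
      simplexV μ σ2 := by
  rw [intervalIntegral.integral_of_le zero_le_one, integral_Ioc_eq_integral_Ioo,
    setIntegral_congr_fun measurableSet_Ioo fun y hy =>
      (simplexU_sq_mul_sq_mul_simplexPdf_eq hμ hσ2 hy).trans (smul_eq_mul _ _).symm,
    ← integral_image_eq_integral_abs_deriv_smul measurableSet_Ioo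
      (fun y hy => (hasDerivAt_simplexResidual hμ hy).hasDerivWithinAt)
      (strictMonoOn_simplexResidual hμ).injOn,
    image_simplexResidual hμ, setIntegral_univ, integral_simplexScoreMomentDensity hμ hσ2]
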